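/- arXiv:2311.14364 — 2 statements merged into one kernel-verified Lean document; each statement's English description precedes it below -/
import Mathlib

section
/- Let f : X → ℝ be a filter on a Lefschetz complex with n = |BD(f)| birth-death pairs, and let Α : {1,…,n} → BD(f) be the bijection that orders the birth-death pairs by strictly decreasing filter value of their birth-giving cells. Then Α is a shallow order of f. -/
attribute [local instance] Classical.propDecidable

/-- A Lefschetz complex over an ambient finite type `C` of potential cells:
a finite set `cells` of cells, a dimension function, and a mod-2 incidence
function `bd` supported on `cells`, with `bd x y ≠ 0` only if
`dim y = dim x + 1`, and `∂∘∂ = 0` mod 2. -/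
structure LC (C : Type) [Fintype C] [DecidableEq C] : Type where
  cells : Finset C
  dim : C → ℤ
  bd : C → C → ZMod 2
  bd_mem : ∀ x y, bd x y ≠ 0 → x ∈ cells ∧ y ∈ cells
  bd_dim : ∀ x y, bd x y ≠ 0 → dim y = dim x + 1
  bd_sq : ∀ x z, ∑ y, bd x y * bd y z = 0

variable {C : Type} [Fintype C] [DecidableEq C]

/-- A filter on a Lefschetz complex: injective on the cells, and increasing
along the facet relation. -/
def IsFilter (L : LC C) (f : C → ℝ) : Prop :=
  (∀ x ∈ L.cells, ∀ y ∈ L.cells, f x = f y → x = y) ∧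
  ∀ x y, L.bd x y ≠ 0 → f x < f y

lemma LC.bd_self (L : LC C) (a : C) : L.bd a a = 0 := by
  by_contra h
  have := L.bd_dim a a h
  omega

/-- The boundary map of the quotient after canceling `(s,t)`:
`∂'(x,y) = ∂(x,y) + ∂(s,y)·∂(x,t)` on the remaining cells, `0` elsewhere. -/
def cancelBd (L : LC C) (s t : C) : C → C → ZMod 2 := fun x y =>
  if x ∈ L.cells \ {s, t} ∧ y ∈ L.cells \ {s, t} then
    L.bd x y + L.bd s y * L.bd x t
  else 0

private lemma zmod2_add_self : ∀ a : ZMod 2, a + a = 0 := by decide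

/-- The quotient Lefschetz complex after canceling the facet-cofacet pair `(s,t)`. -/
noncomputable def cancel (L : LC C) (s t : C) : LC C :=
  if hst : L.bd s t = 1 then
    { cells := L.cells \ {s, t}
      dim := L.dim
      bd := cancelBd L s t
      bd_mem := by
        intro x y h
        unfold cancelBd at h
        split_ifs at h with hc
        · exact hc
        · exact absurd rfl h
      bd_dim := by
        intro x y h
        unfold cancelBd at h
        split_ifs at h with hc
        · by_cases hxy : L.bd x y = 0
          · rw [hxy, zero_add] at h
            have h1 : L.bd s y ≠ 0 := fun hz => by simp [hz] at h
            have h2 : L.bd x t ≠ 0 := fun hz => by simp [hz] at h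
            have d1 := L.bd_dim s y h1
            have d2 := L.bd_dim x t h2
            have d3 := L.bd_dim s t (by simp [hst])
            omega
          · exact L.bd_dim x y hxy
        · exact absurd rfl h
      bd_sq := by
        intro x z
        by_cases hx : x ∈ L.cells \ {s, t}
        swap
        · refine Finset.sum_eq_zero fun y _ => ?_
          unfold cancelBd
          rw [if_neg (fun hc => hx hc.1), zero_mul]
        by_cases hz : z ∈ L.cells \ {s, t}
        swap
        · refine Finset.sum_eq_zero fun y _ => ?_
          have h0 : cancelBd L s t y z = 0 := by
            unfold cancelBd; rw [if_neg (fun hc => hz hc.2)]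
          rw [h0, mul_zero]
        have key : ∀ y, cancelBd L s t x y * cancelBd L s t y z =
            (L.bd x y + L.bd s y * L.bd x t) * (L.bd y z + L.bd s z * L.bd y t) := by
          intro y
          by_cases hy : y ∈ L.cells \ {s, t}
          · unfold cancelBd
            rw [if_pos ⟨hx, hy⟩, if_pos ⟨hy, hz⟩]
          · have lhs0 : cancelBd L s t x y = 0 := by
              unfold cancelBd; rw [if_neg (fun hc => hy hc.2)]
            rw [lhs0, zero_mul]
            by_cases hyc : y ∈ L.cells
            · have hyst : y = s ∨ y = t := by
                simp only [Finset.mem_sdiff, Finset.mem_insert, Finset.mem_singleton] at hy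
                tauto
              rcases hyst with rfl | rfl
              · simp [L.bd_self, hst, zmod2_add_self]
              · simp [L.bd_self, hst, zmod2_add_self]
            · have b1 : L.bd x y = 0 := by
                by_contra hb; exact hyc (L.bd_mem x y hb).2
              have b2 : L.bd s y = 0 := by
                by_contra hb; exact hyc (L.bd_mem s y hb).2
              have b3 : L.bd y z = 0 := by
                by_contra hb; exact hyc (L.bd_mem y z hb).1
              have b4 : L.bd y t = 0 := by
                by_contra hb; exact hyc (L.bd_mem y t hb).1
              rw [b1, b2, b3, b4]
              ring
        rw [Finset.sum_congr rfl fun y _ => key y]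
        have expand : ∀ y : C,
            (L.bd x y + L.bd s y * L.bd x t) * (L.bd y z + L.bd s z * L.bd y t) =
            L.bd x y * L.bd y z + L.bd s z * (L.bd x y * L.bd y t)
              + L.bd x t * (L.bd s y * L.bd y z)
              + L.bd x t * L.bd s z * (L.bd s y * L.bd y t) := by
          intro y; ring
        rw [Finset.sum_congr rfl fun y _ => expand y]
        simp only [Finset.sum_add_distrib, ← Finset.mul_sum, L.bd_sq, mul_zero,
          add_zero, zero_add] }
  else L

/-- The boundary operator on mod-2 chains. -/
noncomputable def bdOp (L : LC C) : (C → ZMod 2) →ₗ[ZMod 2] (C → ZMod 2) where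
  toFun c := fun x => ∑ y, L.bd x y * c y
  map_add' a b := by
    funext x
    simp [mul_add, Finset.sum_add_distrib]
  map_smul' m a := by
    funext x
    simp only [Pi.smul_apply, smul_eq_mul, RingHom.id_apply]
    rw [Finset.mul_sum]
    exact Finset.sum_congr rfl fun y _ => by ring

/-- The `p`-chains of a Lefschetz complex: mod-2 chains supported on cells of
dimension `p`. -/
def chains (L : LC C) (p : ℤ) : Submodule (ZMod 2) (C → ZMod 2) where
  carrier := {c | ∀ x, c x ≠ 0 → x ∈ L.cells ∧ L.dim x = p}
  zero_mem' := by intro x hx; simp at hx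
  add_mem' := by
    intro a b ha hb x hx
    by_cases h1 : a x = 0
    · refine hb x fun h2 => hx ?_
      show a x + b x = 0
      rw [h1, h2, add_zero]
    · exact ha x h1
  smul_mem' := by
    intro m c hc x hx
    refine hc x fun h0 => hx ?_
    show m * c x = 0
    rw [h0, mul_zero]

/-- The `p`-cycles. -/
noncomputable def cycles (L : LC C) (p : ℤ) : Submodule (ZMod 2) (C → ZMod 2) :=
  chains L p ⊓ LinearMap.ker (bdOp L)

/-- The `p`-boundaries. -/
noncomputable def boundaries (L : LC C) (p : ℤ) : Submodule (ZMod 2) (C → ZMod 2) :=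
  Submodule.map (bdOp L) (chains L (p + 1))

/-- The mod-2 homology of a Lefschetz complex in dimension `p`. -/
noncomputable def homology (L : LC C) (p : ℤ) : Type :=
  cycles L p ⧸ (Submodule.comap (cycles L p).subtype (boundaries L p))

noncomputable instance (L : LC C) (p : ℤ) : AddCommGroup (homology L p) :=
  inferInstanceAs (AddCommGroup (cycles L p ⧸
    Submodule.comap (cycles L p).subtype (boundaries L p)))

noncomputable instance (L : LC C) (p : ℤ) : Module (ZMod 2) (homology L p) :=
  inferInstanceAs (Module (ZMod 2) (cycles L p ⧸
    Submodule.comap (cycles L p).subtype (boundaries L p)))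

/-- The boundary of the cell `y`, as a chain. -/
def col (L : LC C) (y : C) : C → ZMod 2 := fun x => L.bd x y

/-- The chain `v` is the boundary of a chain supported on cells with filter
value `< b`. -/
def IsBdryBelow (L : LC C) (f : C → ℝ) (b : ℝ) (v : C → ZMod 2) : Prop :=
  ∃ c : C → ZMod 2, (∀ z, c z ≠ 0 → z ∈ L.cells ∧ f z < b) ∧ bdOp L c = v

/-- The cell `y` gives death: `[∂y] ≠ 0` in the homology of the sublevel set
strictly below `f y`. -/
def givesDeath (L : LC C) (f : C → ℝ) (y : C) : Prop :=
  y ∈ L.cells ∧ ¬ IsBdryBelow L f (f y) (col L y)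

/-- The cell `y` gives birth: `[∂y] = 0` in the homology of the sublevel set
strictly below `f y`. -/
def givesBirth (L : LC C) (f : C → ℝ) (y : C) : Prop :=
  y ∈ L.cells ∧ IsBdryBelow L f (f y) (col L y)

/-- The unique chain supported on death-giving cells below `y` whose boundary
is `∂y` (for birth-giving `y`); junk value otherwise. -/
noncomputable def canChain (L : LC C) (f : C → ℝ) (y : C) : C → ZMod 2 :=
  if h : ∃ c : C → ZMod 2,
      (∀ z, c z ≠ 0 → f z < f y ∧ givesDeath L f z) ∧ bdOp L c = col L y
  then h.choose else 0

/-- The canonical cycle `d_y = y + c_y` of a birth-giving cell `y`. -/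
noncomputable def canCycle (L : LC C) (f : C → ℝ) (y : C) : C → ZMod 2 :=
  Pi.single y 1 + canChain L f y

/-- `v` and `w` are homologous in the sublevel complex strictly below `b`. -/
def HomBelow (L : LC C) (f : C → ℝ) (b : ℝ) (v w : C → ZMod 2) : Prop :=
  ∃ c : C → ZMod 2, (∀ z, c z ≠ 0 → z ∈ L.cells ∧ f z < b) ∧ bdOp L c = v + w

/-- Sorting a finset of cells by increasing filter value (fueled recursion). -/
noncomputable def sortAux (f : C → ℝ) : ℕ → Finset C → List C
  | 0, _ => []
  | n + 1, S =>
    if h : S.Nonempty then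
      let m := (Finset.exists_min_image S f h).choose
      m :: sortAux f n (S.erase m)
    else []

/-- The cells of `L` listed in increasing order of filter value. -/
noncomputable def sortedCells (L : LC C) (f : C → ℝ) : List C :=
  sortAux f L.cells.card L.cells

/-- An element of `S` maximizing `f`, with default value. -/
noncomputable def maxCellD (f : C → ℝ) (S : Finset C) (dflt : C) : C :=
  if h : S.Nonempty then (Finset.exists_max_image S f h).choose else dflt

/-- One step of the persistence pairing algorithm: the state is the pair
(unpaired birth-giving cells, birth-death pairs found so far), and `y` is the
next cell in the filter order.  If `y` gives birth it is added to the unpaired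
set; if `y` gives death, the unique subset `A` of the unpaired cells whose
canonical cycles sum to a cycle homologous to `∂y` below `y` is found, and `y`
is paired with the cell of `A` of maximal filter value. -/
noncomputable def pairStep (L : LC C) (f : C → ℝ) (st : Finset C × Finset (C × C))
    (y : C) : Finset C × Finset (C × C) :=
  if givesBirth L f y then (insert y st.1, st.2)
  else
    let A : Finset C :=
      if h : ∃! A : Finset C, A ⊆ st.1 ∧
          HomBelow L f (f y) (∑ x ∈ A, canCycle L f x) (col L y)
      then h.exists.choose else ∅
    let s := maxCellD f A y
    (st.1.erase s, insert (s, y) st.2)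

/-- The state of the persistence pairing after processing all cells. -/
noncomputable def pairState (L : LC C) (f : C → ℝ) : Finset C × Finset (C × C) :=
  (sortedCells L f).foldl (pairStep L f) (∅, ∅)

/-- The birth-death pairs `BD(f)` of the filter `f`. -/
noncomputable def BD (L : LC C) (f : C → ℝ) : Finset (C × C) :=
  (pairState L f).2

/-- The state of the persistence pairing after processing the cells with
filter value `< b`. -/
noncomputable def stateBelow (L : LC C) (f : C → ℝ) (b : ℝ) :
    Finset C × Finset (C × C) :=
  ((sortedCells L f).filter (fun x => decide (f x < b))).foldl (pairStep L f) (∅, ∅)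

/-- The birth-giving cells with value `< b` that are unpaired by the
persistence pairing restricted to the sublevel set below `b`. -/
noncomputable def unpairedBelow (L : LC C) (f : C → ℝ) (b : ℝ) : Finset C :=
  (stateBelow L f b).1

/-- `(s,t)` is a shallow pair: `s` is the facet of `t` with maximal filter
value and `t` is the cofacet of `s` with minimal filter value. -/
def IsShallow (L : LC C) (f : C → ℝ) (s t : C) : Prop :=
  L.bd s t = 1 ∧ (∀ x, L.bd x t ≠ 0 → f x ≤ f s) ∧ (∀ y, L.bd s y ≠ 0 → f t ≤ f y)

/-- Cancel a list of pairs in sequence. -/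
noncomputable def cancelList : LC C → List (C × C) → LC C
  | L, [] => L
  | L, p :: ps => cancelList (cancel L p.1 p.2) ps

/-- The quotient after canceling the first `k` pairs of the sequence `Φ`. -/
noncomputable def quotAt (L : LC C) {n : ℕ} (Φ : Fin n → C × C) (k : ℕ) : LC C :=
  cancelList L ((List.ofFn Φ).take k)

/-- `Φ` is a shallow order: an enumeration of the birth-death pairs of `f`
such that each pair is shallow for the quotient obtained by canceling all
preceding pairs. -/
def IsShallowOrder (L : LC C) (f : C → ℝ) {n : ℕ} (Φ : Fin n → C × C) : Prop :=
  Function.Injective Φ ∧ (∀ i, Φ i ∈ BD L f) ∧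
  ∀ i : Fin n, IsShallow (quotAt L Φ i) f (Φ i).1 (Φ i).2

/-- The depth poset: the intersection of the strict total orders induced on
`BD(f)` by all shallow orders. -/
def DepthRel (L : LC C) (f : C → ℝ) (φ ψ : C × C) : Prop :=
  φ ∈ BD L f ∧ ψ ∈ BD L f ∧
  ∀ Φ : Fin (BD L f).card → C × C, IsShallowOrder L f Φ →
    ∀ i j : Fin (BD L f).card, Φ i = φ → Φ j = ψ → i < j

/-- The rank of the lower-left minor of the ordered boundary matrix with rows
the cells of filter value `≥ a` and columns the cells of filter value `≤ b`. -/
noncomputable def llRank (L : LC C) (f : C → ℝ) (a b : ℝ) : ℕ :=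
  Matrix.rank (Matrix.of fun (x : {x : C // x ∈ L.cells ∧ a ≤ f x})
    (y : {y : C // y ∈ L.cells ∧ f y ≤ b}) => L.bd x.1 y.1)

/-- `Φ` and `Ψ` differ by transposing two adjacent positions. -/
def AdjSwap {n : ℕ} (Φ Ψ : Fin n → C × C) : Prop :=
  ∃ (k : Fin n) (hk : (k : ℕ) + 1 < n),
    Ψ k = Φ ⟨k + 1, hk⟩ ∧ Ψ ⟨k + 1, hk⟩ = Φ k ∧
    ∀ i : Fin n, i ≠ k → i ≠ ⟨k + 1, hk⟩ → Ψ i = Φ i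

/-!
The persistence pairing is computed with canonical cycles: a birth-giving cell `x` carries the
cycle `x + c_x`, with `c_x` supported on earlier death-giving cells, and a death-giving cell `t`
is paired with the last cell of the unique set of unpaired births whose canonical cycles are
homologous to `∂t` before `t` enters. This yields a reduction of the boundary matrix: a reduced
column `red t` for every death `t`, whose last entry is its partner `s`, and an expansion of
every column `∂y` as a sum of reduced columns of deaths not after `y`.

If `s` is the last birth of all pairs, then `s` occurs in `red t` only, so the cofacets of `s`
are the cells whose expansion uses `red t`, all of them not before `t`, and every facet of `t` is
not after `s`: the pair `(s,t)` is shallow. Canceling it keeps the reduced columns and adds the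
expansion of `∂t` to every column that used `red t`, which gives a reduction of the quotient for
the remaining pairs. Induction along the decreasing births proves the theorem.
-/

open Finset

lemma ZModModule.sum_symmDiff {α M : Type*} [DecidableEq α] [AddCommGroup M]
    [Module (ZMod 2) M] (A B : Finset α) (g : α → M) :
    ∑ x ∈ symmDiff A B, g x = ∑ x ∈ A, g x + ∑ x ∈ B, g x := by
  rw [← sum_union_inter, ← sum_sdiff (f := g) (inter_subset_union (s := A) (t := B)), add_assoc,
    ZModModule.add_self, add_zero, symmDiff_eq_sup_sdiff_inf]
  rfl

lemma ZMod.eq_one_of_ne_zero_two {a : ZMod 2} : a ≠ 0 → a = 1 := by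
  revert a
  decide

lemma List.mem_iff_of_pairwise_append_cons {α β : Type*} [Preorder β] {g : α → β}
    {l₁ l₂ : List α} {y : α} (h : (l₁ ++ y :: l₂).Pairwise fun a b => g a < g b) (z : α) :
    z ∈ l₁ ↔ z ∈ l₁ ++ y :: l₂ ∧ g z < g y := by
  rw [List.pairwise_append, List.pairwise_cons] at h
  refine ⟨fun hz => ⟨List.mem_append_left _ hz, h.2.2 z hz y List.mem_cons_self⟩, ?_⟩
  rintro ⟨hz, hlt⟩
  rcases List.mem_append.1 hz with hz | hz
  · exact hz
  rcases List.mem_cons.1 hz with rfl | hz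
  · exact absurd hlt (lt_irrefl _)
  · exact absurd (h.2.1.1 z hz) (lt_asymm hlt)

lemma IsFilter.injOn {L : LC C} {f : C → ℝ} (hf : IsFilter L f) : Set.InjOn f L.cells :=
  fun x hx y hy h => hf.1 x hx y hy h

namespace LC

variable {L : LC C} {f : C → ℝ}

/-! ### Chains below a filter value -/

variable (L) in
lemma bdOp_apply (c : C → ZMod 2) (x : C) : bdOp L c x = ∑ y, L.bd x y * c y := rfl

variable (L) in
lemma bdOp_single (t : C) : bdOp L (Pi.single t 1) = col L t := by
  funext x
  simp [bdOp_apply, Pi.single_apply, col]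

variable (L) in
lemma bdOp_indicator (M : Finset C) :
    bdOp L (fun z => if z ∈ M then 1 else 0) = ∑ t ∈ M, col L t := by
  funext x
  simp [bdOp_apply, col, Finset.sum_apply]

variable (L) in
lemma bdOp_col (t : C) : bdOp L (col L t) = 0 :=
  funext fun x => L.bd_sq x t

variable (L f) in
def chainsBelow (b : ℝ) : Submodule (ZMod 2) (C → ZMod 2) where
  carrier := {c | ∀ z, c z ≠ 0 → z ∈ L.cells ∧ f z < b}
  zero_mem' := by simp
  add_mem' {c d} hc hd z hz := by
    by_cases hcz : c z = 0
    · exact hd z (by simpa [hcz] using hz)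
    · exact hc z hcz
  smul_mem' a c hc z hz := hc z fun h => hz (by simp [h])

variable (L f) in
noncomputable def bdryBelow (b : ℝ) : Submodule (ZMod 2) (C → ZMod 2) :=
  (L.chainsBelow f b).map (bdOp L)

lemma chainsBelow_mono {b b' : ℝ} (h : b ≤ b') : L.chainsBelow f b ≤ L.chainsBelow f b' :=
  fun _ hc z hz => ⟨(hc z hz).1, (hc z hz).2.trans_le h⟩

lemma bdryBelow_mono {b b' : ℝ} (h : b ≤ b') : L.bdryBelow f b ≤ L.bdryBelow f b' :=
  Submodule.map_mono (chainsBelow_mono h)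

lemma single_mem_chainsBelow {b : ℝ} {x : C} (hx : x ∈ L.cells) (hxb : f x < b) :
    Pi.single x 1 ∈ L.chainsBelow f b := fun z hz => by
  obtain rfl : z = x := by by_contra h; simp [h] at hz
  exact ⟨hx, hxb⟩

lemma col_mem_bdryBelow {b : ℝ} {x : C} (hx : x ∈ L.cells) (hxb : f x < b) :
    col L x ∈ L.bdryBelow f b :=
  ⟨_, single_mem_chainsBelow hx hxb, bdOp_single L x⟩

lemma col_mem_chainsBelow (hf : IsFilter L f) (y : C) : col L y ∈ L.chainsBelow f (f y) :=
  fun z hz => ⟨(L.bd_mem z y hz).1, hf.2 z y hz⟩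

lemma isBdryBelow_iff {b : ℝ} {v : C → ZMod 2} : IsBdryBelow L f b v ↔ v ∈ L.bdryBelow f b :=
  Iff.rfl

lemma homBelow_iff {b : ℝ} {v w : C → ZMod 2} :
    HomBelow L f b v w ↔ v + w ∈ L.bdryBelow f b :=
  Iff.rfl

lemma homBelow_refl (b : ℝ) (v : C → ZMod 2) : HomBelow L f b v v :=
  homBelow_iff.2 (by rw [ZModModule.add_self]; exact zero_mem _)

/-- Induction on chains along the filter value of their last cell `x`: `c + x` lies below `x`. -/
@[elab_as_elim]
theorem chain_induction (hf : Set.InjOn f L.cells) {P : (C → ZMod 2) → Prop} (zero : P 0)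
    (step : ∀ x ∈ L.cells, ∀ c, c x ≠ 0 → c + Pi.single x 1 ∈ L.chainsBelow f (f x) →
      (∀ c' ∈ L.chainsBelow f (f x), P c') → P c)
    (c : C → ZMod 2) (hc : ∀ z, c z ≠ 0 → z ∈ L.cells) : P c := by
  induction hn : (L.cells.filter fun z => ∃ y, c y ≠ 0 ∧ f z ≤ f y).card
    using Nat.strong_induction_on generalizing c with
  | _ n ih =>
  by_cases hc0 : c = 0
  · exact hc0 ▸ zero
  obtain ⟨x, hx, hmax⟩ : ∃ x, c x ≠ 0 ∧ ∀ z, c z ≠ 0 → f z ≤ f x := by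
    obtain ⟨z, hz⟩ := Function.ne_iff.1 hc0
    obtain ⟨x, hx, hmax⟩ :=
      (univ.filter fun z => c z ≠ 0).exists_max_image f ⟨z, by simpa using hz⟩
    exact ⟨x, by simpa using hx, fun z hz => hmax z (by simpa using hz)⟩
  have htop : c + Pi.single x 1 ∈ L.chainsBelow f (f x) := by
    intro z hz
    by_cases hzx : z = x
    · subst hzx
      exact absurd (by decide : (1 + 1 : ZMod 2) = 0)
        (by simpa [ZMod.eq_one_of_ne_zero_two hx] using hz)
    · have hcz : c z ≠ 0 := by simpa [hzx] using hz
      exact ⟨hc z hcz, (hmax z hcz).lt_of_ne fun h => hzx (hf (hc z hcz) (hc x hx) h)⟩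
  refine step x (hc x hx) c hx htop fun c' hc' => ih _ ?_ c' (fun z hz => (hc' z hz).1) rfl
  subst hn
  refine card_lt_card ((ssubset_iff_of_subset fun z hz => ?_).2 ⟨x, ?_, fun hx' => ?_⟩)
  · simp only [mem_filter] at hz ⊢
    obtain ⟨hz, y, hy, hzy⟩ := hz
    exact ⟨hz, x, hx, hzy.trans (hc' y hy).2.le⟩
  · simpa using ⟨hc x hx, x, hx, le_rfl⟩
  · obtain ⟨-, y, hy, hxy⟩ := mem_filter.1 hx'
    exact (hxy.trans_lt (hc' y hy).2).false

/-! ### Canonical cycles -/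

lemma givesDeath_of_not_givesBirth {x : C} (hx : x ∈ L.cells) (h : ¬ givesBirth L f x) :
    givesDeath L f x :=
  ⟨hx, fun h' => h ⟨hx, h'⟩⟩

lemma not_givesDeath_of_givesBirth {x : C} (h : givesBirth L f x) : ¬ givesDeath L f x :=
  fun h' => h'.2 h.2

/-- A birth-giving last cell of `c` is traded for the chain below it with the same boundary,
a death-giving last cell `t` for `red t` plus a chain below `t`. -/
theorem exists_bdOp_eq_sum (hf : IsFilter L f) {b : ℝ} (red : C → C → ZMod 2)
    (hred : ∀ t, givesDeath L f t → f t < b → HomBelow L f (f t) (red t) (col L t))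
    {c : C → ZMod 2} (hc : c ∈ L.chainsBelow f b) :
    ∃ M : Finset C, (∀ t ∈ M, givesDeath L f t ∧ f t < b) ∧ bdOp L c = ∑ t ∈ M, red t := by
  suffices ∀ b' ≤ b, c ∈ L.chainsBelow f b' →
      ∃ M : Finset C, (∀ t ∈ M, givesDeath L f t ∧ f t < b') ∧ bdOp L c = ∑ t ∈ M, red t from
    this b le_rfl hc
  refine chain_induction hf.injOn (fun _ _ _ => ⟨∅, by simp, by simp⟩) ?_ c
    (fun z hz => (hc z hz).1)
  intro x hx c hcx htop ih b' hb' hc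
  have hxb : f x < b' := (hc x hcx).2
  by_cases hbirth : givesBirth L f x
  · obtain ⟨d, hd, hde⟩ := hbirth.2
    obtain ⟨M, hM, hMe⟩ := ih _ (add_mem htop hd) (f x) (hxb.le.trans hb') (add_mem htop hd)
    refine ⟨M, fun t ht => ⟨(hM t ht).1, (hM t ht).2.trans hxb⟩, ?_⟩
    rwa [map_add, map_add, bdOp_single, hde, add_assoc, ZModModule.add_self, add_zero] at hMe
  · have hd := givesDeath_of_not_givesBirth hx hbirth
    obtain ⟨e, he, hee⟩ := hred x hd (hxb.trans_le hb')
    obtain ⟨M, hM, hMe⟩ := ih _ (add_mem htop he) (f x) (hxb.le.trans hb') (add_mem htop he)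
    refine ⟨insert x M, fun t ht => ?_, ?_⟩
    · rcases mem_insert.1 ht with rfl | ht
      · exact ⟨hd, hxb⟩
      · exact ⟨(hM t ht).1, (hM t ht).2.trans hxb⟩
    · rw [sum_insert fun h => (hM x h).2.false, ← hMe, map_add, map_add, bdOp_single, hee]
      abel_nf
      simp [two_mul, ZModModule.add_self]

lemma exists_death_supported_bdOp_eq (hf : IsFilter L f) {b : ℝ} {c : C → ZMod 2}
    (hc : c ∈ L.chainsBelow f b) :
    ∃ c', (∀ z, c' z ≠ 0 → f z < b ∧ givesDeath L f z) ∧ bdOp L c' = bdOp L c := by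
  obtain ⟨M, hM, hMe⟩ := exists_bdOp_eq_sum hf (col L) (fun t _ _ => homBelow_refl _ _) hc
  refine ⟨fun z => if z ∈ M then 1 else 0, fun z hz => ?_, by rw [bdOp_indicator, hMe]⟩
  have hzM : z ∈ M := by by_contra h; simp [h] at hz
  exact (hM z hzM).symm

lemma canChain_spec (hf : IsFilter L f) {x : C} (hx : givesBirth L f x) :
    (∀ z, canChain L f x z ≠ 0 → f z < f x ∧ givesDeath L f z) ∧
      bdOp L (canChain L f x) = col L x := by
  obtain ⟨-, d, hd, hde⟩ := hx
  obtain ⟨c, hc, hce⟩ := exists_death_supported_bdOp_eq hf hd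
  have h : ∃ c : C → ZMod 2, (∀ z, c z ≠ 0 → f z < f x ∧ givesDeath L f z) ∧
      bdOp L c = col L x := ⟨c, hc, hce.trans hde⟩
  rw [canChain, dif_pos h]
  exact h.choose_spec

lemma canChain_mem_chainsBelow (hf : IsFilter L f) {x : C} (hx : givesBirth L f x) :
    canChain L f x ∈ L.chainsBelow f (f x) := fun z hz =>
  ⟨((canChain_spec hf hx).1 z hz).2.1, ((canChain_spec hf hx).1 z hz).1⟩

lemma bdOp_canCycle (hf : IsFilter L f) {x : C} (hx : givesBirth L f x) :
    bdOp L (canCycle L f x) = 0 := by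
  rw [canCycle, map_add, bdOp_single, (canChain_spec hf hx).2, ZModModule.add_self]

lemma canCycle_ne_zero (hf : IsFilter L f) {x z : C} (hx : givesBirth L f x)
    (hz : canCycle L f x z ≠ 0) : z = x ∨ f z < f x ∧ givesDeath L f z := by
  by_cases hzx : z = x
  · exact Or.inl hzx
  · exact Or.inr ((canChain_spec hf hx).1 z (by simpa [canCycle, hzx] using hz))

lemma canCycle_mem_chainsBelow (hf : IsFilter L f) {x : C} (hx : givesBirth L f x) {b : ℝ}
    (hxb : f x < b) : canCycle L f x ∈ L.chainsBelow f b :=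
  add_mem (single_mem_chainsBelow hx.1 hxb)
    (chainsBelow_mono hxb.le (canChain_mem_chainsBelow hf hx))

lemma sum_canCycle_apply (hf : IsFilter L f) {A : Finset C} (hA : ∀ x ∈ A, givesBirth L f x)
    {w : C} (hw : givesBirth L f w) :
    (∑ x ∈ A, canCycle L f x) w = if w ∈ A then 1 else 0 := by
  have hcyc : ∀ x ∈ A, canCycle L f x w = if x = w then 1 else 0 := by
    intro x hx
    split_ifs with hxw
    · subst hxw
      have : canChain L f x x = 0 := by_contra fun h => ((canChain_spec hf (hA x hx)).1 x h).1.false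
      simp [canCycle, this]
    · by_contra h
      rcases canCycle_ne_zero hf (hA x hx) h with rfl | ⟨-, hd⟩
      exacts [hxw rfl, not_givesDeath_of_givesBirth hw hd]
  rw [Finset.sum_apply, sum_congr rfl hcyc, sum_ite_eq']

lemma le_of_sum_canCycle_ne_zero (hf : IsFilter L f) {A : Finset C} {r : ℝ}
    (hA : ∀ x ∈ A, givesBirth L f x ∧ f x ≤ r) {w : C}
    (hw : (∑ x ∈ A, canCycle L f x) w ≠ 0) : f w ≤ r := by
  rw [Finset.sum_apply] at hw
  obtain ⟨x, hx, hxw⟩ := exists_ne_zero_of_sum_ne_zero hw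
  rcases canCycle_ne_zero hf (hA x hx).1 hxw with rfl | ⟨hlt, -⟩
  exacts [(hA w hx).2, hlt.le.trans (hA x hx).2]

lemma add_sum_canCycle_mem_chainsBelow (hf : IsFilter L f) {x : C} {A : Finset C}
    (hA : ∀ x' ∈ A, givesBirth L f x' ∧ f x' ≤ f x) (hxA : x ∈ A) {c : C → ZMod 2}
    (hc : c + Pi.single x 1 ∈ L.chainsBelow f (f x)) :
    c + ∑ x' ∈ A, canCycle L f x' ∈ L.chainsBelow f (f x) := by
  have hlt : ∀ x' ∈ A.erase x, canCycle L f x' ∈ L.chainsBelow f (f x) := fun x' hx' => by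
    obtain ⟨hne, hx'A⟩ := mem_erase.1 hx'
    obtain ⟨hx'b, hle⟩ := hA x' hx'A
    exact canCycle_mem_chainsBelow hf hx'b
      (hle.lt_of_ne fun h => hne (hf.injOn hx'b.1 (hA x hxA).1.1 h))
  rw [← add_sum_erase _ _ hxA]
  show c + ((Pi.single x 1 + canChain L f x) + _) ∈ _
  rw [← add_assoc, ← add_assoc]
  exact add_mem (add_mem hc (canChain_mem_chainsBelow hf (hA x hxA).1)) (sum_mem hlt)

/-! ### The pairing algorithm -/

variable (L f) in
/-- What `pairStep` records when it pairs `p.2` with `p.1`: the set `A` of unpaired births it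
used. -/
def IsPairWitness (p : C × C) (A : Finset C) : Prop :=
  (∀ x ∈ A, givesBirth L f x ∧ f x ≤ f p.1) ∧ p.1 ∈ A ∧
    HomBelow L f (f p.2) (∑ x ∈ A, canCycle L f x) (col L p.2)

lemma IsPairWitness.givesBirth_fst {p : C × C} {A : Finset C} (h : L.IsPairWitness f p A) :
    givesBirth L f p.1 :=
  (h.1 p.1 h.2.1).1

lemma IsPairWitness.sum_mem_bdryBelow {p : C × C} {A : Finset C} (h : L.IsPairWitness f p A)
    (hp : p.2 ∈ L.cells) {b : ℝ} (hb : f p.2 < b) :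
    ∑ x ∈ A, canCycle L f x ∈ L.bdryBelow f b := by
  rw [← add_zero (∑ x ∈ A, canCycle L f x), ← ZModModule.add_self (col L p.2), ← add_assoc]
  exact add_mem (bdryBelow_mono hb.le (homBelow_iff.1 h.2.2)) (col_mem_bdryBelow hp hb)

lemma eq_or_lt_of_sum_canCycle_ne_zero (hf : IsFilter L f) {P : Finset (C × C)}
    {A : C → Finset C} (hA : ∀ p ∈ P, L.IsPairWitness f p (A p.2))
    (hinj : ∀ p ∈ P, ∀ q ∈ P, p.1 = q.1 → p = q) {p q : C × C} (hp : p ∈ P) (hq : q ∈ P)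
    (h : (∑ x ∈ A q.2, canCycle L f x) p.1 ≠ 0) : q = p ∨ f p.1 < f q.1 := by
  have hpb := (hA p hp).givesBirth_fst
  rw [sum_canCycle_apply hf (fun x hx => ((hA q hq).1 x hx).1) hpb] at h
  rcases ((hA q hq).1 p.1 (by simpa using h)).2.lt_or_eq with hlt | heq
  · exact Or.inr hlt
  · exact Or.inl (hinj q hq p hp (hf.injOn (hA q hq).givesBirth_fst.1 hpb.1 heq.symm))

/-- The last cell of a cycle gives birth; if it is unpaired its canonical cycle is split off,
otherwise the witness cycle of its pair, a boundary below `y`, is added to remove it. -/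
theorem exists_subset_homBelow_col (hf : IsFilter L f) {U : Finset C} {P : Finset (C × C)}
    {A : C → Finset C} {y : C} (hA : ∀ p ∈ P, L.IsPairWitness f p (A p.2))
    (hP : ∀ p ∈ P, p.2 ∈ L.cells ∧ f p.2 < f y)
    (hU : ∀ x, givesBirth L f x → f x < f y → x ∉ U → ∃ q ∈ P, q.1 = x) :
    ∃ B ⊆ U, HomBelow L f (f y) (∑ x ∈ B, canCycle L f x) (col L y) := by
  let R : (C → ZMod 2) → Prop := fun v =>
    ∃ B ⊆ U, (∑ x ∈ B, canCycle L f x) + v ∈ L.bdryBelow f (f y)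
  have R_add : ∀ v w, R v → R w → R (v + w) := by
    rintro v w ⟨B₁, h₁, hv⟩ ⟨B₂, h₂, hw⟩
    refine ⟨symmDiff B₁ B₂, fun x hx => ?_, ?_⟩
    · rcases mem_symmDiff.1 hx with ⟨h, -⟩ | ⟨h, -⟩
      exacts [h₁ h, h₂ h]
    · rw [ZModModule.sum_symmDiff, add_add_add_comm]
      exact add_mem hv hw
  have R_bdry : ∀ v ∈ L.bdryBelow f (f y), R v := fun v hv => ⟨∅, empty_subset _, by simpa⟩
  have R_cycle : ∀ w, (∀ z, w z ≠ 0 → z ∈ L.cells) → bdOp L w = 0 →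
      w ∈ L.chainsBelow f (f y) → R w := by
    intro w hw
    refine chain_induction hf.injOn (fun _ _ => R_bdry 0 (zero_mem _)) ?_ w hw
    intro x hx w hwx htop ih hcyc hwy
    have hxy : f x < f y := (hwy x hwx).2
    have hxb : givesBirth L f x := ⟨hx, _, htop, by rw [map_add, hcyc, bdOp_single, zero_add]⟩
    obtain ⟨A', hA', hxA', hRA'⟩ : ∃ A' : Finset C, (∀ x' ∈ A', givesBirth L f x' ∧ f x' ≤ f x) ∧
        x ∈ A' ∧ R (∑ x' ∈ A', canCycle L f x') := by
      by_cases hxU : x ∈ U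
      · refine ⟨{x}, by simpa using hxb, mem_singleton_self x, {x}, by simpa using hxU, ?_⟩
        rw [ZModModule.add_self]
        exact zero_mem _
      · obtain ⟨q, hq, rfl⟩ := hU x hxb hxy hxU
        exact ⟨A q.2, (hA q hq).1, (hA q hq).2.1,
          R_bdry _ ((hA q hq).sum_mem_bdryBelow (hP q hq).1 (hP q hq).2)⟩
    have hw' := add_sum_canCycle_mem_chainsBelow hf hA' hxA' htop
    have hR := ih _ hw' (by rw [map_add, hcyc, map_sum, zero_add,
      sum_eq_zero fun x' hx' => bdOp_canCycle hf (hA' x' hx').1]) (chainsBelow_mono hxy.le hw')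
    simpa [add_assoc, ZModModule.add_self] using R_add _ _ hR hRA'
  exact R_cycle (col L y) (fun z hz => (L.bd_mem z y hz).1) (bdOp_col L y)
    (col_mem_chainsBelow hf y)

lemma exists_sum_witness_apply_fst_ne_zero (hf : IsFilter L f) {P : Finset (C × C)}
    {A : C → Finset C} (hA : ∀ p ∈ P, L.IsPairWitness f p (A p.2))
    (hinj : ∀ p ∈ P, ∀ q ∈ P, p.1 = q.1 → p = q) {M : Finset C}
    (hM : ∀ t ∈ M, ∃ s, (s, t) ∈ P) (hne : M.Nonempty) :
    ∃ p ∈ P, (∑ t ∈ M, ∑ x ∈ A t, canCycle L f x) p.1 ≠ 0 := by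
  obtain ⟨t, ht⟩ := hne
  obtain ⟨p, hp, hpmax⟩ := (P.filter fun q => q.2 ∈ M).exists_max_image (fun q => f q.1)
    ⟨_, mem_filter.2 ⟨(hM t ht).choose_spec, ht⟩⟩
  obtain ⟨hpP, hpM⟩ := mem_filter.1 hp
  refine ⟨p, hpP, ?_⟩
  rw [Finset.sum_apply, sum_eq_single_of_mem p.2 hpM, sum_canCycle_apply hf
    (fun x hx => ((hA p hpP).1 x hx).1) (hA p hpP).givesBirth_fst, if_pos (hA p hpP).2.1]
  · exact one_ne_zero
  intro t ht htp
  obtain ⟨s, hs⟩ := hM t ht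
  by_contra hne
  rcases eq_or_lt_of_sum_canCycle_ne_zero hf hA hinj hpP hs hne with h | h
  · exact htp (by rw [← h])
  · exact (hpmax (s, t) (mem_filter.2 ⟨hs, ht⟩)).not_gt h

/-- The difference of the two sums is a boundary below `y`, hence a sum of witness cycles of
deaths before `y`. Such a sum, if nonempty, is nonzero at a paired birth, where the difference
vanishes; so the difference is `0`. -/
theorem eq_of_homBelow_col (hf : IsFilter L f) {P : Finset (C × C)} {A : C → Finset C} {y : C}
    (hA : ∀ p ∈ P, L.IsPairWitness f p (A p.2)) (hinj : ∀ p ∈ P, ∀ q ∈ P, p.1 = q.1 → p = q)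
    (hdeath : ∀ t, givesDeath L f t → f t < f y → ∃ s, (s, t) ∈ P) {B₁ B₂ : Finset C}
    (hB₁ : ∀ x ∈ B₁, givesBirth L f x ∧ ∀ q ∈ P, q.1 ≠ x)
    (hB₂ : ∀ x ∈ B₂, givesBirth L f x ∧ ∀ q ∈ P, q.1 ≠ x)
    (h₁ : HomBelow L f (f y) (∑ x ∈ B₁, canCycle L f x) (col L y))
    (h₂ : HomBelow L f (f y) (∑ x ∈ B₂, canCycle L f x) (col L y)) : B₁ = B₂ := by
  have hD : ∀ x ∈ symmDiff B₁ B₂, givesBirth L f x ∧ ∀ q ∈ P, q.1 ≠ x := fun x hx => by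
    rcases mem_symmDiff.1 hx with ⟨h, -⟩ | ⟨h, -⟩
    exacts [hB₁ x h, hB₂ x h]
  have hDb : ∀ x ∈ symmDiff B₁ B₂, givesBirth L f x := fun x hx => (hD x hx).1
  obtain ⟨c, hc, hce⟩ : ∑ x ∈ symmDiff B₁ B₂, canCycle L f x ∈ L.bdryBelow f (f y) := by
    have := add_mem (homBelow_iff.1 h₁) (homBelow_iff.1 h₂)
    rwa [add_comm (∑ x ∈ B₂, _), ZModModule.add_add_add_cancel, ← ZModModule.sum_symmDiff] at this
  obtain ⟨M, hM, hMe⟩ := exists_bdOp_eq_sum hf (fun t => ∑ x ∈ A t, canCycle L f x)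
    (fun t ht hty => (hA _ (hdeath t ht hty).choose_spec).2.2) hc
  rw [hce] at hMe
  have hM0 : M = ∅ := by
    by_contra hne
    obtain ⟨p, hp, hne⟩ := exists_sum_witness_apply_fst_ne_zero hf hA hinj
      (fun t ht => hdeath t (hM t ht).1 (hM t ht).2) (nonempty_iff_ne_empty.2 hne)
    rw [← hMe, sum_canCycle_apply hf hDb (hA p hp).givesBirth_fst] at hne
    exact hne (if_neg fun h => (hD _ h).2 p hp rfl)
  rw [hM0, sum_empty] at hMe
  by_contra hne
  obtain ⟨d, hd⟩ : (symmDiff B₁ B₂).Nonempty :=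
    nonempty_iff_ne_empty.2 fun h => hne (symmDiff_eq_bot.1 h)
  have := congrFun hMe d
  rw [sum_canCycle_apply hf hDb (hDb d hd), if_pos hd] at this
  exact one_ne_zero this

lemma maxCellD_spec {α : Type} {g : α → ℝ} {S : Finset α} (hS : S.Nonempty) (d : α) :
    maxCellD g S d ∈ S ∧ ∀ x ∈ S, g x ≤ g (maxCellD g S d) := by
  rw [maxCellD, dif_pos hS]
  exact (exists_max_image S g hS).choose_spec

lemma sortAux_spec {α : Type} [DecidableEq α] {g : α → ℝ} {S : Finset α} (hS : Set.InjOn g S)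
    {n : ℕ} (hn : S.card ≤ n) :
    (sortAux g n S).toFinset = S ∧ (sortAux g n S).Pairwise fun a b => g a < g b := by
  induction n generalizing S with
  | zero =>
    obtain rfl := card_eq_zero.1 (Nat.le_zero.1 hn)
    simp [sortAux]
  | succ n ih =>
    rcases S.eq_empty_or_nonempty with rfl | hne
    · simp [sortAux]
    obtain ⟨hm, hmin⟩ := (exists_min_image S g hne).choose_spec
    obtain ⟨h₁, h₂⟩ := ih (hS.mono (erase_subset _ S)) (by rw [card_erase_of_mem hm]; omega)
    rw [sortAux, dif_pos hne]
    refine ⟨by rw [List.toFinset_cons, h₁, insert_erase hm],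
      List.pairwise_cons.2 ⟨fun a ha => ?_, h₂⟩⟩
    obtain ⟨hne', haS⟩ := mem_erase.1 (h₁ ▸ List.mem_toFinset.2 ha)
    exact (hmin a haS).lt_of_ne fun h => hne' (hS haS hm h.symm)

lemma sortedCells_spec (hf : Set.InjOn f L.cells) :
    (sortedCells L f).toFinset = L.cells ∧ (sortedCells L f).Pairwise fun a b => f a < f b :=
  sortAux_spec hf le_rfl

variable (L f) in
structure PairingInv (ps : Finset C) (st : Finset C × Finset (C × C)) : Prop where
  mem_unpaired : ∀ x, x ∈ st.1 ↔ x ∈ ps ∧ givesBirth L f x ∧ ∀ q ∈ st.2, q.1 ≠ x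
  pair_mem : ∀ p ∈ st.2,
    p.1 ∈ ps ∧ p.2 ∈ ps ∧ givesBirth L f p.1 ∧ givesDeath L f p.2 ∧ f p.1 < f p.2
  death_paired : ∀ t ∈ ps, givesDeath L f t → ∃ s, (s, t) ∈ st.2
  fst_inj : ∀ p ∈ st.2, ∀ q ∈ st.2, p.1 = q.1 → p = q
  snd_inj : ∀ p ∈ st.2, ∀ q ∈ st.2, p.2 = q.2 → p = q
  witness : ∃ A : C → Finset C, ∀ p ∈ st.2, L.IsPairWitness f p (A p.2)

namespace PairingInv

variable {ps : Finset C} {st : Finset C × Finset (C × C)} {y : C}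

lemma empty : PairingInv L f ∅ (∅, ∅) :=
  ⟨by simp, by simp, by simp, by simp, by simp, ⟨fun _ => ∅, by simp⟩⟩

lemma pairStep_of_givesBirth (inv : PairingInv L f ps st) (hy : y ∉ ps)
    (hb : givesBirth L f y) : PairingInv L f (insert y ps) (pairStep L f st y) := by
  rw [pairStep, if_pos hb]
  refine ⟨fun x => ?_, fun p hp => ?_, fun t ht htd => ?_, inv.fst_inj, inv.snd_inj, inv.witness⟩
  · rw [mem_insert, inv.mem_unpaired, mem_insert]
    constructor
    · rintro (rfl | h)
      · exact ⟨Or.inl rfl, hb, fun q hq h => hy (h ▸ (inv.pair_mem q hq).1)⟩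
      · exact ⟨Or.inr h.1, h.2⟩
    · rintro ⟨rfl | h, h'⟩
      exacts [Or.inl rfl, Or.inr ⟨h, h'⟩]
  · obtain ⟨h₁, h₂, h⟩ := inv.pair_mem p hp
    exact ⟨mem_insert_of_mem h₁, mem_insert_of_mem h₂, h⟩
  · rcases mem_insert.1 ht with rfl | ht
    · exact absurd htd (not_givesDeath_of_givesBirth hb)
    · exact inv.death_paired t ht htd

lemma existsUnique_homBelow_col (hf : IsFilter L f) (inv : PairingInv L f ps st)
    (hps : ∀ z, z ∈ ps ↔ z ∈ L.cells ∧ f z < f y) :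
    ∃! B, B ⊆ st.1 ∧ HomBelow L f (f y) (∑ x ∈ B, canCycle L f x) (col L y) := by
  obtain ⟨A, hA⟩ := inv.witness
  have hunp : ∀ x ∈ st.1, givesBirth L f x ∧ ∀ q ∈ st.2, q.1 ≠ x :=
    fun x hx => ((inv.mem_unpaired x).1 hx).2
  obtain ⟨B, hB, hBy⟩ := exists_subset_homBelow_col hf hA
    (fun p hp => (hps p.2).1 (inv.pair_mem p hp).2.1) fun x hxb hxy hxU => by
      by_contra h
      push Not at h
      exact hxU ((inv.mem_unpaired x).2 ⟨(hps x).2 ⟨hxb.1, hxy⟩, hxb, h⟩)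
  refine ⟨B, ⟨hB, hBy⟩, fun B' ⟨hB', hB'y⟩ => eq_of_homBelow_col hf hA inv.fst_inj
    (fun t ht hty => inv.death_paired t ((hps t).2 ⟨ht.1, hty⟩) ht)
    (fun x hx => hunp x (hB' hx)) (fun x hx => hunp x (hB hx)) hB'y hBy⟩

lemma exists_pairStep_eq (hf : IsFilter L f) (inv : PairingInv L f ps st)
    (hps : ∀ z, z ∈ ps ↔ z ∈ L.cells ∧ f z < f y) (hd : givesDeath L f y) :
    ∃ B ⊆ st.1, HomBelow L f (f y) (∑ x ∈ B, canCycle L f x) (col L y) ∧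
      ∃ s ∈ B, (∀ x ∈ B, f x ≤ f s) ∧
        pairStep L f st y = (st.1.erase s, insert (s, y) st.2) := by
  have hEU := inv.existsUnique_homBelow_col hf hps
  obtain ⟨hB, hBy⟩ := hEU.exists.choose_spec
  have hBne : hEU.exists.choose.Nonempty := by
    rw [nonempty_iff_ne_empty]
    rintro h
    rw [h, sum_empty] at hBy
    exact hd.2 (isBdryBelow_iff.2 (by simpa [homBelow_iff] using hBy))
  obtain ⟨hsB, hsmax⟩ := maxCellD_spec hBne y
  refine ⟨_, hB, hBy, _, hsB, hsmax, ?_⟩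
  rw [pairStep, if_neg fun hb => not_givesDeath_of_givesBirth hb hd, dif_pos hEU]

lemma pairStep_of_givesDeath (hf : IsFilter L f) (inv : PairingInv L f ps st)
    (hps : ∀ z, z ∈ ps ↔ z ∈ L.cells ∧ f z < f y) (hd : givesDeath L f y) :
    PairingInv L f (insert y ps) (pairStep L f st y) := by
  obtain ⟨B, hB, hBy, s, hsB, hsmax, hstep⟩ := inv.exists_pairStep_eq hf hps hd
  obtain ⟨hsps, hsb, hsunp⟩ := (inv.mem_unpaired s).1 (hB hsB)
  have hold : ∀ q ∈ st.2, q.1 ≠ s ∧ q.2 ≠ y := fun q hq =>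
    ⟨hsunp q hq, fun h => (lt_irrefl (f y)) (h ▸ ((hps q.2).1 (inv.pair_mem q hq).2.1).2)⟩
  obtain ⟨A, hA⟩ := inv.witness
  rw [hstep]
  refine ⟨fun x => ?_, fun p hp => ?_, fun t ht htd => ?_, fun p hp q hq h => ?_,
    fun p hp q hq h => ?_, ⟨Function.update A y B, fun p hp => ?_⟩⟩
  · simp only [mem_erase, inv.mem_unpaired, mem_insert, forall_eq_or_imp]
    constructor
    · rintro ⟨hxs, hx, hxb, hxq⟩
      exact ⟨Or.inr hx, hxb, Ne.symm hxs, hxq⟩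
    · rintro ⟨rfl | hx, hxb, hsx, hxq⟩
      · exact absurd hd (not_givesDeath_of_givesBirth hxb)
      · exact ⟨Ne.symm hsx, hx, hxb, hxq⟩
  · rcases mem_insert.1 hp with rfl | hp
    · exact ⟨mem_insert_of_mem hsps, mem_insert_self _ _, hsb, hd, ((hps s).1 hsps).2⟩
    · obtain ⟨h₁, h₂, h⟩ := inv.pair_mem p hp
      exact ⟨mem_insert_of_mem h₁, mem_insert_of_mem h₂, h⟩
  · rcases mem_insert.1 ht with rfl | ht
    · exact ⟨s, mem_insert_self _ _⟩
    · obtain ⟨s', hs'⟩ := inv.death_paired t ht htd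
      exact ⟨s', mem_insert_of_mem hs'⟩
  · rcases mem_insert.1 hp with rfl | hp <;> rcases mem_insert.1 hq with rfl | hq
    exacts [rfl, absurd h.symm (hold q hq).1, absurd h (hold p hp).1, inv.fst_inj p hp q hq h]
  · rcases mem_insert.1 hp with rfl | hp <;> rcases mem_insert.1 hq with rfl | hq
    exacts [rfl, absurd h.symm (hold q hq).2, absurd h (hold p hp).2, inv.snd_inj p hp q hq h]
  · rcases mem_insert.1 hp with rfl | hp
    · rw [Function.update_self]
      exact ⟨fun x hx => ⟨((inv.mem_unpaired x).1 (hB hx)).2.1, hsmax x hx⟩, hsB, hBy⟩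
    · rw [Function.update_of_ne (hold p hp).2]
      exact hA p hp

lemma pairStep (hf : IsFilter L f) (inv : PairingInv L f ps st) (hy : y ∈ L.cells)
    (hps : ∀ z, z ∈ ps ↔ z ∈ L.cells ∧ f z < f y) :
    PairingInv L f (insert y ps) (_root_.pairStep L f st y) := by
  by_cases hb : givesBirth L f y
  · exact inv.pairStep_of_givesBirth (fun h => lt_irrefl _ ((hps y).1 h).2) hb
  · exact inv.pairStep_of_givesDeath hf hps (givesDeath_of_not_givesBirth hy hb)

lemma exists_expand (hf : IsFilter L f) (inv : PairingInv L f L.cells st) {A : C → Finset C}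
    (hA : ∀ p ∈ st.2, L.IsPairWitness f p (A p.2)) (hy : y ∈ L.cells) :
    ∃ E : Finset C, col L y = ∑ t ∈ E, ∑ x ∈ A t, canCycle L f x ∧
      (∀ t ∈ E, (∃ q ∈ st.2, q.2 = t) ∧ (t = y ∨ f t < f y)) ∧ (givesDeath L f y → y ∈ E) := by
  have hpaired : ∀ t, givesDeath L f t → ∃ q ∈ st.2, q.2 = t := fun t ht =>
    ⟨_, (inv.death_paired t ht.1 ht).choose_spec, rfl⟩
  have hred : ∀ t, givesDeath L f t →
      HomBelow L f (f t) (∑ x ∈ A t, canCycle L f x) (col L t) := fun t ht =>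
    (hA _ (inv.death_paired t ht.1 ht).choose_spec).2.2
  by_cases hb : givesBirth L f y
  · obtain ⟨-, d, hd, hde⟩ := hb
    obtain ⟨M, hM, hMe⟩ := exists_bdOp_eq_sum hf _ (fun t ht _ => hred t ht) hd
    exact ⟨M, hde ▸ hMe, fun t ht => ⟨hpaired t (hM t ht).1, Or.inr (hM t ht).2⟩,
      fun hd' => absurd hd' (not_givesDeath_of_givesBirth ⟨hy, d, hd, hde⟩)⟩
  have hd := givesDeath_of_not_givesBirth hy hb
  obtain ⟨c, hc, hce⟩ := hred y hd
  obtain ⟨M, hM, hMe⟩ := exists_bdOp_eq_sum hf _ (fun t ht _ => hred t ht) hc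
  refine ⟨insert y M, ?_, fun t ht => ?_, fun _ => mem_insert_self y M⟩
  · rw [sum_insert fun h => (hM y h).2.false, ← hMe, hce, ← add_assoc, ZModModule.add_self,
      zero_add]
  · rcases mem_insert.1 ht with rfl | ht
    · exact ⟨hpaired t hd, Or.inl rfl⟩
    · exact ⟨hpaired t (hM t ht).1, Or.inr (hM t ht).2⟩

end PairingInv

lemma pairingInv_foldl (hf : IsFilter L f) (rest : List C) :
    ∀ done st, sortedCells L f = done ++ rest → PairingInv L f done.toFinset st →
      PairingInv L f L.cells (rest.foldl (pairStep L f) st) := by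
  obtain ⟨hcells, hsorted⟩ := sortedCells_spec hf.injOn
  induction rest with
  | nil =>
    intro done st h inv
    rwa [← hcells, h, List.append_nil]
  | cons y rest ih =>
    intro done st h inv
    rw [h] at hcells hsorted
    have hy : y ∈ L.cells := by simp [← hcells]
    have hps : ∀ z, z ∈ done.toFinset ↔ z ∈ L.cells ∧ f z < f y := fun z => by
      rw [List.mem_toFinset, List.mem_iff_of_pairwise_append_cons hsorted, ← List.mem_toFinset,
        hcells]
    refine ih (done ++ [y]) _ (by simp [h]) ?_
    rw [List.toFinset_append, List.toFinset_cons, List.toFinset_nil, union_comm]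
    exact inv.pairStep hf hy hps

lemma pairingInv_pairState (hf : IsFilter L f) : PairingInv L f L.cells (pairState L f) :=
  pairingInv_foldl hf _ [] _ rfl PairingInv.empty

/-! ### Reductions of the boundary matrix and cancellation -/

lemma cells_cancel {s t : C} (h : L.bd s t = 1) : (cancel L s t).cells = L.cells \ {s, t} := by
  rw [cancel, dif_pos h]

lemma bd_cancel {s t : C} (h : L.bd s t = 1) : (cancel L s t).bd = cancelBd L s t := by
  rw [cancel, dif_pos h]

lemma cells_cancel_subset (s t : C) : (cancel L s t).cells ⊆ L.cells := by
  unfold cancel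
  split_ifs
  exacts [sdiff_subset, subset_rfl]

lemma col_cancel {s t y : C} (hst : L.bd s t = 1) (hty : L.bd t y = 0)
    (hy : y ∈ (cancel L s t).cells) : col (cancel L s t) y = col L y + L.bd s y • col L t := by
  rw [cells_cancel hst] at hy
  funext x
  simp only [col, bd_cancel hst, cancelBd, Pi.add_apply, Pi.smul_apply, smul_eq_mul]
  by_cases hx : x ∈ L.cells \ {s, t}
  · rw [if_pos ⟨hx, hy⟩, mul_comm]
  rw [if_neg fun h => hx h.1]
  by_cases hxc : x ∈ L.cells
  · obtain rfl | rfl : x = s ∨ x = t := by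
      by_contra h
      push Not at h
      exact hx (by simp [hxc, h.1, h.2])
    · rw [hst, mul_one, ZModModule.add_self]
    · rw [hty, L.bd_self, mul_zero, add_zero]
  · have h₀ : ∀ z, L.bd x z = 0 := fun z => by_contra fun h => hxc (L.bd_mem x z h).1
    rw [h₀, h₀, mul_zero, add_zero]

variable (L f) in
/-- A reduction of the boundary matrix adapted to the pairs `J`, as computed by the persistence
algorithm: `red t` is the reduced column of the death-giving cell `t`, whose filter-last entry is
in the row of the partner of `t`, and `expand y` writes the column of the cell `y` as a sum of
reduced columns. -/
structure Reduction (J : Finset (C × C)) where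
  red : C → C → ZMod 2
  expand : C → Finset C
  snd_inj : ∀ p ∈ J, ∀ q ∈ J, p.2 = q.2 → p = q
  fst_ne_snd : ∀ p ∈ J, ∀ q ∈ J, p.1 ≠ q.2
  snd_mem : ∀ p ∈ J, p.2 ∈ L.cells
  fst_lt_snd : ∀ p ∈ J, f p.1 < f p.2
  red_le : ∀ p ∈ J, ∀ x, red p.2 x ≠ 0 → f x ≤ f p.1
  red_fst : ∀ p ∈ J, red p.2 p.1 = 1
  red_triangular : ∀ p ∈ J, ∀ q ∈ J, red q.2 p.1 ≠ 0 → q = p ∨ f p.1 < f q.1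
  col_eq : ∀ y ∈ L.cells, col L y = ∑ t ∈ expand y, red t
  expand_mem : ∀ y ∈ L.cells, ∀ t ∈ expand y, (∃ q ∈ J, q.2 = t) ∧ (t = y ∨ f t < f y)
  mem_expand : ∀ p ∈ J, p.2 ∈ expand p.2

namespace Reduction

variable {J : Finset (C × C)} {p : C × C}

lemma red_apply_fst (R : Reduction L f J) (hp : p ∈ J) (htop : ∀ q ∈ J, f q.1 ≤ f p.1) {t : C}
    (ht : ∃ q ∈ J, q.2 = t) : R.red t p.1 = if t = p.2 then 1 else 0 := by
  obtain ⟨q, hq, rfl⟩ := ht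
  split_ifs with h
  · rw [R.snd_inj q hq p hp h]
    exact R.red_fst p hp
  · by_contra hne
    rcases R.red_triangular p hp q hq hne with rfl | hlt
    exacts [h rfl, (htop q hq).not_gt hlt]

lemma bd_fst (R : Reduction L f J) (hp : p ∈ J) (htop : ∀ q ∈ J, f q.1 ≤ f p.1) {y : C}
    (hy : y ∈ L.cells) : L.bd p.1 y = if p.2 ∈ R.expand y then 1 else 0 := by
  rw [show L.bd p.1 y = col L y p.1 from rfl, R.col_eq y hy, Finset.sum_apply,
    sum_congr rfl fun t ht => R.red_apply_fst hp htop (R.expand_mem y hy t ht).1, sum_ite_eq']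

lemma bd_snd (R : Reduction L f J) (hp : p ∈ J) (htop : ∀ q ∈ J, f q.1 ≤ f p.1) (y : C) :
    L.bd p.2 y = 0 := by
  by_cases hy : y ∈ L.cells
  · rw [show L.bd p.2 y = col L y p.2 from rfl, R.col_eq y hy, Finset.sum_apply]
    refine sum_eq_zero fun t ht => by_contra fun h => ?_
    obtain ⟨q, hq, rfl⟩ := (R.expand_mem y hy t ht).1
    exact ((R.red_le q hq _ h).trans (htop q hq)).not_gt (R.fst_lt_snd p hp)
  · exact by_contra fun h => hy (L.bd_mem _ _ h).2

theorem isShallow (R : Reduction L f J) (hp : p ∈ J) (htop : ∀ q ∈ J, f q.1 ≤ f p.1) :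
    IsShallow L f p.1 p.2 := by
  refine ⟨by rw [R.bd_fst hp htop (R.snd_mem p hp), if_pos (R.mem_expand p hp)],
    fun x hx => ?_, fun y hy => ?_⟩
  · rw [show L.bd x p.2 = col L p.2 x from rfl, R.col_eq _ (R.snd_mem p hp),
      Finset.sum_apply] at hx
    obtain ⟨t, ht, hne⟩ := exists_ne_zero_of_sum_ne_zero hx
    obtain ⟨q, hq, rfl⟩ := (R.expand_mem _ (R.snd_mem p hp) t ht).1
    exact (R.red_le q hq x hne).trans (htop q hq)
  · have hyc := (L.bd_mem _ _ hy).2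
    rw [R.bd_fst hp htop hyc] at hy
    rcases (R.expand_mem y hyc p.2 (by by_contra h; simp [h] at hy)).2 with h | h
    exacts [h ▸ le_rfl, h.le]

variable (R : Reduction L f J) (p) in
def cancelExpand (y : C) : Finset C :=
  if p.2 ∈ R.expand y then symmDiff (R.expand y) (R.expand p.2) else R.expand y

lemma col_eq_cancel (R : Reduction L f J) (hp : p ∈ J) (htop : ∀ q ∈ J, f q.1 ≤ f p.1) {y : C}
    (hy : y ∈ (cancel L p.1 p.2).cells) :
    col (cancel L p.1 p.2) y = ∑ t ∈ R.cancelExpand p y, R.red t := by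
  have hyc := cells_cancel_subset _ _ hy
  rw [col_cancel (R.isShallow hp htop).1 (R.bd_snd hp htop y) hy, R.bd_fst hp htop hyc,
    R.col_eq y hyc, R.col_eq p.2 (R.snd_mem p hp), cancelExpand]
  split_ifs
  · rw [one_smul, ZModModule.sum_symmDiff]
  · rw [zero_smul, add_zero]

lemma expand_mem_cancel (R : Reduction L f J) (hp : p ∈ J) {y : C} (hy : y ∈ L.cells) {t : C}
    (ht : t ∈ R.cancelExpand p y) : (∃ q ∈ J.erase p, q.2 = t) ∧ (t = y ∨ f t < f y) := by
  have hp₂ := R.mem_expand p hp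
  obtain ⟨hmem, htp⟩ : (t ∈ R.expand y ∨ p.2 ∈ R.expand y ∧ t ∈ R.expand p.2) ∧ t ≠ p.2 := by
    rw [cancelExpand] at ht
    split_ifs at ht with h
    · rcases mem_symmDiff.1 ht with ⟨h₁, h₂⟩ | ⟨h₁, h₂⟩
      · exact ⟨Or.inl h₁, fun e => h₂ (e ▸ hp₂)⟩
      · exact ⟨Or.inr ⟨h, h₁⟩, fun e => h₂ (e ▸ h)⟩
    · exact ⟨Or.inl ht, fun e => h (e ▸ ht)⟩
  have hJ : ∀ q ∈ J, q.2 = t → ∃ q ∈ J.erase p, q.2 = t := fun q hq hqt =>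
    ⟨q, mem_erase.2 ⟨fun e => htp (e ▸ hqt.symm), hq⟩, hqt⟩
  rcases hmem with h | ⟨h₁, h₂⟩
  · obtain ⟨⟨q, hq, hqt⟩, hlt⟩ := R.expand_mem y hy t h
    exact ⟨hJ q hq hqt, hlt⟩
  · obtain ⟨⟨q, hq, hqt⟩, hlt⟩ := R.expand_mem p.2 (R.snd_mem p hp) t h₂
    have htlt : f t < f p.2 := hlt.resolve_left htp
    refine ⟨hJ q hq hqt, Or.inr ?_⟩
    rcases (R.expand_mem y hy p.2 h₁).2 with e | h
    exacts [e ▸ htlt, htlt.trans h]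

lemma mem_cancelExpand (R : Reduction L f J) (hp : p ∈ J) {q : C × C} (hq : q ∈ J.erase p) :
    q.2 ∈ R.cancelExpand p q.2 := by
  obtain ⟨hqp, hq⟩ := mem_erase.1 hq
  have hne : q.2 ≠ p.2 := fun e => hqp (R.snd_inj q hq p hp e)
  rw [cancelExpand]
  split_ifs with h
  · refine mem_symmDiff.2 (Or.inl ⟨R.mem_expand q hq, fun hq₂ => ?_⟩)
    rcases (R.expand_mem p.2 (R.snd_mem p hp) q.2 hq₂).2 with e | h₁
    · exact hne e
    rcases (R.expand_mem q.2 (R.snd_mem q hq) p.2 h).2 with e | h₂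
    exacts [hne e.symm, lt_asymm h₁ h₂]
  · exact R.mem_expand q hq

/-- Canceling the pair with the last birth keeps the reduced columns; the columns whose
expansion used `red p.2` absorb the expansion of `∂ p.2`. -/
noncomputable def cancel (R : Reduction L f J) (hp : p ∈ J) (htop : ∀ q ∈ J, f q.1 ≤ f p.1) :
    Reduction (_root_.cancel L p.1 p.2) f (J.erase p) where
  red := R.red
  expand := R.cancelExpand p
  snd_inj q hq q' hq' := R.snd_inj q (mem_of_mem_erase hq) q' (mem_of_mem_erase hq')
  fst_ne_snd q hq q' hq' := R.fst_ne_snd q (mem_of_mem_erase hq) q' (mem_of_mem_erase hq')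
  snd_mem q hq := by
    obtain ⟨hqp, hq⟩ := mem_erase.1 hq
    rw [cells_cancel (R.isShallow hp htop).1]
    simpa [R.snd_mem q hq, Ne.symm (R.fst_ne_snd p hp q hq)] using
      fun h => hqp (R.snd_inj q hq p hp h)
  fst_lt_snd q hq := R.fst_lt_snd q (mem_of_mem_erase hq)
  red_le q hq := R.red_le q (mem_of_mem_erase hq)
  red_fst q hq := R.red_fst q (mem_of_mem_erase hq)
  red_triangular q hq q' hq' := R.red_triangular q (mem_of_mem_erase hq) q' (mem_of_mem_erase hq')
  col_eq _ hy := R.col_eq_cancel hp htop hy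
  expand_mem _ hy _ ht := R.expand_mem_cancel hp (cells_cancel_subset _ _ hy) ht
  mem_expand _ hq := R.mem_cancelExpand hp hq

end Reduction

theorem nonempty_reduction (hf : IsFilter L f) : Nonempty (Reduction L f (BD L f)) := by
  have inv := pairingInv_pairState hf
  obtain ⟨A, hA⟩ := inv.witness
  choose E hE using fun y => inv.exists_expand hf hA (y := y)
  exact ⟨{
    red := fun t => ∑ x ∈ A t, canCycle L f x
    expand := fun y => if hy : y ∈ L.cells then E y hy else ∅
    snd_inj := inv.snd_inj
    fst_ne_snd := fun p hp q hq h => not_givesDeath_of_givesBirth (inv.pair_mem p hp).2.2.1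
      (h ▸ (inv.pair_mem q hq).2.2.2.1)
    snd_mem := fun p hp => (inv.pair_mem p hp).2.1
    fst_lt_snd := fun p hp => (inv.pair_mem p hp).2.2.2.2
    red_le := fun p hp x hx => le_of_sum_canCycle_ne_zero hf (hA p hp).1 hx
    red_fst := fun p hp => by
      rw [sum_canCycle_apply hf (fun x hx => ((hA p hp).1 x hx).1) (hA p hp).givesBirth_fst,
        if_pos (hA p hp).2.1]
    red_triangular := fun p hp q hq h =>
      eq_or_lt_of_sum_canCycle_ne_zero hf hA inv.fst_inj hp hq h
    col_eq := fun y hy => by rw [dif_pos hy]; exact (hE y hy).1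
    expand_mem := fun y hy => by rw [dif_pos hy]; exact (hE y hy).2.1
    mem_expand := fun p hp => by
      rw [dif_pos (inv.pair_mem p hp).2.1]
      exact (hE p.2 _).2.2 (inv.pair_mem p hp).2.2.2.1 }⟩

theorem isShallow_cancelList {l : List (C × C)} (hl : l.Pairwise fun p q => f q.1 < f p.1)
    {L : LC C} {J : Finset (C × C)} (R : Reduction L f J) (hJ : ∀ q, q ∈ J ↔ q ∈ l) (i : ℕ)
    (hi : i < l.length) : IsShallow (cancelList L (l.take i)) f l[i].1 l[i].2 := by
  induction l generalizing L J i with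
  | nil => simp at hi
  | cons p l ih =>
    rw [List.pairwise_cons] at hl
    have hp : p ∈ J := (hJ p).2 List.mem_cons_self
    have htop : ∀ q ∈ J, f q.1 ≤ f p.1 := fun q hq => by
      rcases List.mem_cons.1 ((hJ q).1 hq) with rfl | h
      exacts [le_rfl, (hl.1 q h).le]
    cases i with
    | zero => simpa [cancelList] using R.isShallow hp htop
    | succ i =>
      have hJ' : ∀ q, q ∈ J.erase p ↔ q ∈ l := fun q => by
        rw [mem_erase, hJ, List.mem_cons]
        constructor
        · rintro ⟨hne, rfl | h⟩
          exacts [absurd rfl hne, h]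
        · exact fun h => ⟨fun e => lt_irrefl _ (e ▸ hl.1 q h), Or.inr h⟩
      simpa [cancelList] using ih hl.2 (R.cancel hp htop) hJ' i (by simpa using hi)

end LC

/-- The bijection `Α` ordering the birth-death pairs by
strictly decreasing filter value of their birth-giving cells is a shallow
order of `f`. -/
theorem alpha_is_shallow_order (L : LC C) (f : C → ℝ) (hf : IsFilter L f)
    (A : Fin (BD L f).card → C × C)
    (hinj : Function.Injective A) (hmem : ∀ i, A i ∈ BD L f)
    (hord : ∀ i j : Fin (BD L f).card, i < j → f (A j).1 < f (A i).1) :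
    IsShallowOrder L f A := by
  obtain ⟨R⟩ := LC.nonempty_reduction hf
  have himage : Finset.univ.image A = BD L f :=
    Finset.eq_of_subset_of_card_le (by simpa [Finset.subset_iff] using hmem)
      (by rw [Finset.card_image_of_injective _ hinj, Finset.card_univ, Fintype.card_fin])
  have hJ : ∀ q, q ∈ BD L f ↔ q ∈ List.ofFn A := fun q => by
    rw [← Finset.ext_iff.1 himage q, List.mem_ofFn]
    simp
  refine ⟨hinj, hmem, fun i => ?_⟩
  simpa [quotAt] using LC.isShallow_cancelList (List.pairwise_ofFn.2 hord) R hJ i (by simp)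
end

section
/- Let f : X → ℝ be a filter on a Lefschetz complex with n = |BD(f)|, and let Φ, Ψ : {1,…,n} → BD(f) be bijections that differ by the transposition at positions k, k+1 (i.e., Ψ(k) = Φ(k+1), Ψ(k+1) = Φ(k), and Ψ(i) = Φ(i) for i ≠ k, k+1). If Φ is a shallow order and Φ(k+1) is a shallow pair of the filter induced on the quotient obtained by canceling Φ(1),…,Φ(k−1), then Ψ is also a shallow order, and the quotients obtained by canceling the first i pairs of Φ and of Ψ coincide for all i ≠ k. -/
attribute [local instance] Classical.propDecidable

variable {C : Type} [Fintype C] [DecidableEq C]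

/-! ### Auxiliary lemmas for the transposition lemma -/

private lemma LC.ext' {A B : LC C} (h1 : A.cells = B.cells) (h2 : A.dim = B.dim)
    (h3 : A.bd = B.bd) : A = B := by
  cases A; cases B; simp_all

private lemma cancel_cells' {L : LC C} {s t : C} (h : L.bd s t = 1) :
    (cancel L s t).cells = L.cells \ {s, t} := by
  unfold cancel; rw [dif_pos h]

private lemma cancel_dim' {L : LC C} {s t : C} (h : L.bd s t = 1) :
    (cancel L s t).dim = L.dim := by
  unfold cancel; rw [dif_pos h]

private lemma cancel_bd' {L : LC C} {s t : C} (h : L.bd s t = 1) :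
    (cancel L s t).bd = cancelBd L s t := by
  unfold cancel; rw [dif_pos h]

private lemma cancel_cells_subset (L : LC C) (s t : C) :
    (cancel L s t).cells ⊆ L.cells := by
  unfold cancel
  split_ifs
  · exact Finset.sdiff_subset
  · exact subset_rfl

private lemma cancelList_cells_subset (l : List (C × C)) :
    ∀ L : LC C, (cancelList L l).cells ⊆ L.cells := by
  induction l with
  | nil => intro L; exact subset_rfl
  | cons p ps ih =>
    intro L
    exact (ih (cancel L p.1 p.2)).trans (cancel_cells_subset L p.1 p.2)

private lemma quotAt_cells_subset (L : LC C) {n : ℕ} (Φ : Fin n → C × C) (i : ℕ) :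
    (quotAt L Φ i).cells ⊆ L.cells :=
  cancelList_cells_subset _ L

private lemma cancelList_append (l1 l2 : List (C × C)) :
    ∀ L : LC C, cancelList L (l1 ++ l2) = cancelList (cancelList L l1) l2 := by
  induction l1 with
  | nil => intro L; rfl
  | cons p ps ih => intro L; simp only [List.cons_append, cancelList]; exact ih _

private lemma quotAt_succ (L : LC C) {n : ℕ} (Φ : Fin n → C × C) {i : ℕ}
    (h : i < n) :
    quotAt L Φ (i + 1) = cancel (quotAt L Φ i) (Φ ⟨i, h⟩).1 (Φ ⟨i, h⟩).2 := by
  unfold quotAt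
  have hlen : i < (List.ofFn Φ).length := by simpa using h
  rw [List.take_succ, List.getElem?_eq_getElem hlen, cancelList_append]
  simp [cancelList]

private lemma zmod2_mul_ne_zero {a b : ZMod 2} (h : a * b ≠ 0) : a ≠ 0 ∧ b ≠ 0 := by
  constructor <;> rintro rfl <;> simp at h

/-- The key commutation lemma: two shallow pairs with disjoint cells can be
canceled in either order, and each remains shallow after canceling the other. -/
private lemma shallow_commute (Q : LC C) (f : C → ℝ)
    (hinj : ∀ x ∈ Q.cells, ∀ y ∈ Q.cells, f x = f y → x = y)
    (s t s' t' : C)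
    (h1 : IsShallow Q f s t) (h2 : IsShallow Q f s' t')
    (hss : s' ≠ s) (hst : s' ≠ t) (hts : t' ≠ s) (htt : t' ≠ t) :
    IsShallow (cancel Q s' t') f s t ∧
      cancel (cancel Q s t) s' t' = cancel (cancel Q s' t') s t := by
  obtain ⟨hb1, hfac1, hcof1⟩ := h1
  obtain ⟨hb2, hfac2, hcof2⟩ := h2
  have hsQ : s ∈ Q.cells := (Q.bd_mem s t (by simp [hb1])).1
  have htQ : t ∈ Q.cells := (Q.bd_mem s t (by simp [hb1])).2
  have hs'Q : s' ∈ Q.cells := (Q.bd_mem s' t' (by simp [hb2])).1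
  have ht'Q : t' ∈ Q.cells := (Q.bd_mem s' t' (by simp [hb2])).2
  -- the cross term vanishes
  have hcross : Q.bd s' t * Q.bd s t' = 0 := by
    by_contra h
    obtain ⟨ha, hb⟩ := zmod2_mul_ne_zero h
    have e1 : f s' ≤ f s := hfac1 s' ha
    have e2 : f s ≤ f s' := hfac2 s hb
    exact hss (hinj s' hs'Q s hsQ (le_antisymm e1 e2))
  have hsmem : s ∈ Q.cells \ {s', t'} := by
    simp only [Finset.mem_sdiff, Finset.mem_insert, Finset.mem_singleton]
    exact ⟨hsQ, by intro h; rcases h with h | h <;> simp_all⟩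
  have htmem : t ∈ Q.cells \ {s', t'} := by
    simp only [Finset.mem_sdiff, Finset.mem_insert, Finset.mem_singleton]
    exact ⟨htQ, by intro h; rcases h with h | h <;> simp_all⟩
  have hs'mem : s' ∈ Q.cells \ {s, t} := by
    simp only [Finset.mem_sdiff, Finset.mem_insert, Finset.mem_singleton]
    exact ⟨hs'Q, by intro h; rcases h with h | h <;> simp_all⟩
  have ht'mem : t' ∈ Q.cells \ {s, t} := by
    simp only [Finset.mem_sdiff, Finset.mem_insert, Finset.mem_singleton]
    exact ⟨ht'Q, by intro h; rcases h with h | h <;> simp_all⟩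
  -- boundary values in the one-step quotients
  have hbd2 : (cancel Q s' t').bd = cancelBd Q s' t' := cancel_bd' hb2
  have hbd1 : (cancel Q s t).bd = cancelBd Q s t := cancel_bd' hb1
  have hQ2st : (cancel Q s' t').bd s t = 1 := by
    rw [hbd2]
    unfold cancelBd
    rw [if_pos ⟨hsmem, htmem⟩, hb1, hcross, add_zero]
  have hQ1s't' : (cancel Q s t).bd s' t' = 1 := by
    rw [hbd1]
    unfold cancelBd
    rw [if_pos ⟨hs'mem, ht'mem⟩, hb2]
    rw [show Q.bd s t' * Q.bd s' t = 0 by rw [mul_comm]; exact hcross, add_zero]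
  constructor
  · -- `(s,t)` is shallow in `cancel Q s' t'`
    refine ⟨hQ2st, ?_, ?_⟩
    · intro x hx
      rw [hbd2] at hx
      unfold cancelBd at hx
      split_ifs at hx with hc
      · by_cases hxt : Q.bd x t = 0
        · rw [hxt, zero_add] at hx
          obtain ⟨ha, hb⟩ := zmod2_mul_ne_zero hx
          exact le_trans (hfac2 x hb) (hfac1 s' ha)
        · exact hfac1 x hxt
      · exact absurd rfl hx
    · intro y hy
      rw [hbd2] at hy
      unfold cancelBd at hy
      split_ifs at hy with hc
      · by_cases hsy : Q.bd s y = 0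
        · rw [hsy, zero_add] at hy
          obtain ⟨ha, hb⟩ := zmod2_mul_ne_zero hy
          exact le_trans (hcof1 t' hb) (hcof2 y ha)
        · exact hcof1 y hsy
      · exact absurd rfl hy
  · -- the two double quotients coincide
    have hc12 : (cancel (cancel Q s t) s' t').cells =
        (Q.cells \ {s, t}) \ {s', t'} := by
      rw [cancel_cells' hQ1s't', cancel_cells' hb1]
    have hc21 : (cancel (cancel Q s' t') s t).cells =
        (Q.cells \ {s', t'}) \ {s, t} := by
      rw [cancel_cells' hQ2st, cancel_cells' hb2]
    have hcellseq : (Q.cells \ {s, t}) \ {s', t'} = (Q.cells \ {s', t'}) \ {s, t} := by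
      ext z; simp only [Finset.mem_sdiff]; tauto
    refine LC.ext' (by rw [hc12, hc21, hcellseq]) ?_ ?_
    · rw [cancel_dim' hQ1s't', cancel_dim' hb1, cancel_dim' hQ2st, cancel_dim' hb2]
    · rw [cancel_bd' hQ1s't', cancel_bd' hQ2st]
      funext x y
      unfold cancelBd
      rw [cancel_cells' hb1, cancel_cells' hb2, hbd1, hbd2]
      by_cases hcond : x ∈ (Q.cells \ {s, t}) \ {s', t'} ∧
          y ∈ (Q.cells \ {s, t}) \ {s', t'}
      · rw [if_pos hcond, if_pos (by rw [← hcellseq]; exact hcond)]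
        have hxmem : x ∈ Q.cells \ {s, t} := (Finset.mem_sdiff.mp hcond.1).1
        have hymem : y ∈ Q.cells \ {s, t} := (Finset.mem_sdiff.mp hcond.2).1
        have hxmem' : x ∈ Q.cells \ {s', t'} := by
          have h := hcond.1; rw [hcellseq] at h; exact (Finset.mem_sdiff.mp h).1
        have hymem' : y ∈ Q.cells \ {s', t'} := by
          have h := hcond.2; rw [hcellseq] at h; exact (Finset.mem_sdiff.mp h).1
        unfold cancelBd
        rw [if_pos ⟨hxmem, hymem⟩, if_pos ⟨hs'mem, hymem⟩, if_pos ⟨hxmem, ht'mem⟩,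
          if_pos ⟨hxmem', hymem'⟩, if_pos ⟨hsmem, hymem'⟩, if_pos ⟨hxmem', htmem⟩]
        have h2 : Q.bd s t' * Q.bd s' t = 0 := by rw [mul_comm]; exact hcross
        ring_nf
        linear_combination (Q.bd s y * Q.bd x t - Q.bd s' y * Q.bd x t') * hcross
      · rw [if_neg hcond, if_neg (by rw [← hcellseq]; exact hcond)]

/-- **Transposition lemma.** If `Φ` is a shallow order, `Ψ`
differs from `Φ` by the transposition at positions `k, k+1`, and the pair at
position `k+1` of `Φ` is already shallow after canceling the first `k−1`
pairs, then `Ψ` is also a shallow order, and the quotients after canceling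
the first `i` pairs of `Φ` and `Ψ` coincide for all `i ≠ k`.
(Positions are 0-indexed here: the transposition is at indices `k, k+1`, and
the quotients agree after canceling the first `i` pairs for `i ≠ k+1`.) -/
theorem transpose_shallow_order (L : LC C) (f : C → ℝ) (hf : IsFilter L f)
    (Φ Ψ : Fin (BD L f).card → C × C)
    (k : Fin (BD L f).card) (hk : (k : ℕ) + 1 < (BD L f).card)
    (hΨk : Ψ k = Φ ⟨(k : ℕ) + 1, hk⟩)
    (hΨk1 : Ψ ⟨(k : ℕ) + 1, hk⟩ = Φ k)
    (hΨi : ∀ i : Fin (BD L f).card,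
      i ≠ k → i ≠ (⟨(k : ℕ) + 1, hk⟩ : Fin (BD L f).card) → Ψ i = Φ i)
    (hΦ : IsShallowOrder L f Φ)
    (hsh : IsShallow (quotAt L Φ (k : ℕ)) f
      (Φ ⟨(k : ℕ) + 1, hk⟩).1 (Φ ⟨(k : ℕ) + 1, hk⟩).2) :
    IsShallowOrder L f Ψ ∧
      ∀ i : ℕ, i ≤ (BD L f).card → i ≠ (k : ℕ) + 1 →
        quotAt L Φ i = quotAt L Ψ i := by
  obtain ⟨hΦinj, hΦmem, hΦsh⟩ := hΦ
  have hkn : (k : ℕ) < (BD L f).card := k.2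
  have h1 : IsShallow (quotAt L Φ (k : ℕ)) f (Φ k).1 (Φ k).2 := hΦsh k
  have hnextq : quotAt L Φ ((k : ℕ) + 1) =
      cancel (quotAt L Φ (k : ℕ)) (Φ k).1 (Φ k).2 := quotAt_succ L Φ hkn
  have hnext : IsShallow (cancel (quotAt L Φ (k : ℕ)) (Φ k).1 (Φ k).2) f
      (Φ ⟨(k : ℕ) + 1, hk⟩).1 (Φ ⟨(k : ℕ) + 1, hk⟩).2 := by
    have h := hΦsh ⟨(k : ℕ) + 1, hk⟩
    rwa [show (((⟨(k : ℕ) + 1, hk⟩ : Fin (BD L f).card)) : ℕ) = (k : ℕ) + 1 from rfl,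
      hnextq] at h
  -- membership of the second pair in the quotient, hence disjointness
  have hbne := hnext.1
  rw [cancel_bd' h1.1] at hbne
  unfold cancelBd at hbne
  split_ifs at hbne with hcnd
  swap
  · exact absurd hbne (by decide)
  obtain ⟨hs'mem, ht'mem⟩ := hcnd
  simp only [Finset.mem_sdiff, Finset.mem_insert, Finset.mem_singleton] at hs'mem ht'mem
  have hss : (Φ ⟨(k : ℕ) + 1, hk⟩).1 ≠ (Φ k).1 := fun h => hs'mem.2 (Or.inl h)
  have hst : (Φ ⟨(k : ℕ) + 1, hk⟩).1 ≠ (Φ k).2 := fun h => hs'mem.2 (Or.inr h)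
  have hts : (Φ ⟨(k : ℕ) + 1, hk⟩).2 ≠ (Φ k).1 := fun h => ht'mem.2 (Or.inl h)
  have htt : (Φ ⟨(k : ℕ) + 1, hk⟩).2 ≠ (Φ k).2 := fun h => ht'mem.2 (Or.inr h)
  have hinj : ∀ x ∈ (quotAt L Φ (k : ℕ)).cells, ∀ y ∈ (quotAt L Φ (k : ℕ)).cells,
      f x = f y → x = y := fun x hx y hy =>
    hf.1 x (quotAt_cells_subset L Φ _ hx) y (quotAt_cells_subset L Φ _ hy)
  obtain ⟨hA, hB⟩ := shallow_commute (quotAt L Φ (k : ℕ)) f hinj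
    (Φ k).1 (Φ k).2 (Φ ⟨(k : ℕ) + 1, hk⟩).1 (Φ ⟨(k : ℕ) + 1, hk⟩).2
    h1 hsh hss hst hts htt
  -- the quotients agree up to index k
  have heq_le : ∀ i ≤ (k : ℕ), quotAt L Φ i = quotAt L Ψ i := by
    intro i hi
    induction i with
    | zero => rfl
    | succ j ihj =>
      have hjk : j < (k : ℕ) := Nat.lt_of_lt_of_le (Nat.lt_succ_self j) hi
      have hjn : j < (BD L f).card := hjk.trans hkn
      rw [quotAt_succ L Φ hjn, quotAt_succ L Ψ hjn, ihj (le_of_lt hjk),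
        ← hΨi ⟨j, hjn⟩ (Fin.ne_of_val_ne (by simpa using hjk.ne))
          (Fin.ne_of_val_ne (by simp; omega))]
  have hQΨk : quotAt L Ψ (k : ℕ) = quotAt L Φ (k : ℕ) := (heq_le _ le_rfl).symm
  have hΨk1q : quotAt L Ψ ((k : ℕ) + 1) =
      cancel (quotAt L Φ (k : ℕ)) (Φ ⟨(k : ℕ) + 1, hk⟩).1 (Φ ⟨(k : ℕ) + 1, hk⟩).2 := by
    rw [quotAt_succ L Ψ hkn, hQΨk,
      show (⟨(k : ℕ), hkn⟩ : Fin (BD L f).card) = k from rfl, hΨk]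
  -- the quotients agree from index k+2 on
  have hk2 : ∀ i, (k : ℕ) + 2 ≤ i → i ≤ (BD L f).card →
      quotAt L Φ i = quotAt L Ψ i := by
    intro i hi1 hi2
    induction i with
    | zero => omega
    | succ j ihj =>
      rcases Nat.lt_or_ge j ((k : ℕ) + 2) with hge | hlt
      · have hj : j = (k : ℕ) + 1 := by omega
        subst hj
        have hkn1 : (k : ℕ) + 1 < (BD L f).card := by omega
        rw [quotAt_succ L Φ hkn1, quotAt_succ L Ψ hkn1, hnextq, hΨk1q, hΨk1]
        exact hB
      · have hjn : j < (BD L f).card := by omega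
        rw [quotAt_succ L Φ hjn, quotAt_succ L Ψ hjn, ihj (by omega) (by omega),
          ← hΨi ⟨j, hjn⟩ (Fin.ne_of_val_ne (by simp; omega))
            (Fin.ne_of_val_ne (by simp; omega))]
  have hcomp : Ψ = Φ ∘ (Equiv.swap k ⟨(k : ℕ) + 1, hk⟩) := by
    funext i
    by_cases hik : i = k
    · subst hik; simp only [Function.comp_apply, Equiv.swap_apply_left]; exact hΨk
    by_cases hik1 : i = ⟨(k : ℕ) + 1, hk⟩
    · subst hik1; simp only [Function.comp_apply, Equiv.swap_apply_right]; exact hΨk1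
    · simp only [Function.comp_apply, Equiv.swap_apply_of_ne_of_ne hik hik1]
      exact hΨi i hik hik1
  refine ⟨⟨?_, ?_, ?_⟩, ?_⟩
  · rw [hcomp]; exact hΦinj.comp (Equiv.injective _)
  · intro i; rw [hcomp]; exact hΦmem _
  · intro i
    rcases lt_trichotomy (i : ℕ) (k : ℕ) with hlt | heq | hgt
    · have hiΦ : Ψ i = Φ i := hΨi i (Fin.ne_of_val_ne (by omega))
        (Fin.ne_of_val_ne (by simp; omega))
      rw [hiΦ, ← heq_le _ (le_of_lt hlt)]
      exact hΦsh i
    · have hik : i = k := Fin.ext heq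
      subst hik
      rw [hΨk, ← heq_le _ le_rfl]
      exact hsh
    · rcases Nat.eq_or_lt_of_le hgt with heq1 | hgt1
      · have hik : i = ⟨(k : ℕ) + 1, hk⟩ := Fin.ext (by simp; omega)
        subst hik
        rw [hΨk1,
          show (((⟨(k : ℕ) + 1, hk⟩ : Fin (BD L f).card)) : ℕ) = (k : ℕ) + 1 from rfl,
          hΨk1q]
        exact hA
      · have hiΦ : Ψ i = Φ i := hΨi i (Fin.ne_of_val_ne (by omega))
          (Fin.ne_of_val_ne (by simp; omega))
        rw [hiΦ, ← hk2 (i : ℕ) (by omega) (le_of_lt i.2)]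
        exact hΦsh i
  · intro i hi hne
    rcases Nat.lt_or_ge i ((k : ℕ) + 1) with h | h
    · exact heq_le i (by omega)
    · exact hk2 i (by omega) hi
end
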